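/- Consider the three involutive bijections of ℂ² given by s₁(α, β) = (β, α), s₂(α, β) = (−α−2, −β−2), and s₃(α, β) = (α, −α−β−3). The subgroup of the group of bijections of ℂ² generated by s₁, s₂, s₃ is isomorphic to the dihedral group of order 12 (the symmetry group of a regular hexagon). -/

import Mathlib

/-- The involution `s₁(α, β) = (β, α)` of the parameter plane `ℂ²`. -/
def s₁ : Equiv.Perm (ℂ × ℂ) :=
  Function.Involutive.toPerm (fun p => (p.2, p.1)) (fun p => rfl)

/-- The involution `s₂(α, β) = (−α−2, −β−2)` of the parameter plane `ℂ²`. -/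
def s₂ : Equiv.Perm (ℂ × ℂ) :=
  Function.Involutive.toPerm (fun p => (-p.1 - 2, -p.2 - 2))
    (fun p => by ext <;> simp <;> ring)

/-- The involution `s₃(α, β) = (α, −α−β−3)` of the parameter plane `ℂ²`. -/
def s₃ : Equiv.Perm (ℂ × ℂ) :=
  Function.Involutive.toPerm (fun p => (p.1, -p.1 - p.2 - 3))
    (fun p => by ext <;> simp <;> ring)

/-!
The composite `ρ = s₂ s₁ s₃` is the affine map `(α, β) ↦ (α + β + 1, -α - 2)`, of order 6.
Conjugation by the involution `s₁` inverts it, and `s₂ = ρ³`, `s₃ = s₁ ρ⁴`, so the group is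
generated by `ρ` and `s₁`. These are the dihedral relations, and `s₁` is not a power of `ρ`
since it does not commute with `ρ`; hence `r i ↦ ρ ^ i`, `sr i ↦ s₁ ρ ^ i` maps
`DihedralGroup 6` isomorphically onto the group.
-/

namespace DihedralGroup

variable {n : ℕ} [NeZero n] {G : Type*} [Group G] {r s : G}

theorem pow_val_add (hr : r ^ n = 1) (i j : ZMod n) :
    r ^ (i + j).val = r ^ i.val * r ^ j.val := by
  rw [ZMod.val_add, ← pow_eq_pow_mod _ hr, pow_add]

theorem pow_val_sub (hr : r ^ n = 1) (i j : ZMod n) :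
    r ^ (j - i).val = (r ^ i.val)⁻¹ * r ^ j.val := by
  rw [eq_inv_mul_iff_mul_eq, ← pow_val_add hr, add_sub_cancel]

def lift (hr : r ^ n = 1) (hs : s * s = 1) (hsr : r * s = s * r⁻¹) :
    DihedralGroup n →* G where
  toFun
    | .r i => r ^ i.val
    | .sr i => s * r ^ i.val
  map_one' := by
    show r ^ (0 : ZMod n).val = 1
    simp
  map_mul' := by
    have hpow (k : ℕ) : r ^ k * s = s * (r ^ k)⁻¹ := by
      rw [← inv_pow]; exact (SemiconjBy.pow_right hsr.symm k).symm
    rintro (i | i) (j | j)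
    · exact pow_val_add hr i j
    · show s * r ^ (j - i).val = r ^ i.val * (s * r ^ j.val)
      rw [pow_val_sub hr, ← mul_assoc (r ^ i.val), hpow, mul_assoc]
    · show s * r ^ (i + j).val = s * r ^ i.val * r ^ j.val
      rw [pow_val_add hr, mul_assoc]
    · show r ^ (j - i).val = s * r ^ i.val * (s * r ^ j.val)
      rw [pow_val_sub hr, mul_assoc, ← mul_assoc (r ^ i.val), hpow, ← mul_assoc, ← mul_assoc, hs,
        one_mul]

theorem lift_injective (hn : orderOf r = n) (hs : s * s = 1) (hsr : r * s = s * r⁻¹)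
    (hs_notMem : s ∉ Subgroup.zpowers r) :
    Function.Injective (lift (orderOf_dvd_iff_pow_eq_one.mp (dvd_of_eq hn)) hs hsr) := by
  rw [injective_iff_map_eq_one]
  rintro (i | i) h
  · have h : r ^ i.val = 1 := h
    have : n ∣ i.val := (dvd_of_eq hn.symm).trans (orderOf_dvd_of_pow_eq_one h)
    rw [(ZMod.val_eq_zero i).mp (Nat.eq_zero_of_dvd_of_lt this i.val_lt), r_zero]
  · exact absurd (eq_inv_of_mul_eq_one_left h ▸ inv_mem (Subgroup.npow_mem_zpowers r _)) hs_notMem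

variable (hr : r ^ n = 1) (hs : s * s = 1) (hsr : r * s = s * r⁻¹)

@[simp] theorem lift_r_natCast (k : ℕ) : lift hr hs hsr (.r k) = r ^ k :=
  (congrArg (r ^ ·) (ZMod.val_natCast n k)).trans (pow_eq_pow_mod k hr).symm

@[simp] theorem lift_sr_zero : lift hr hs hsr (.sr 0) = s := by
  show s * r ^ (0 : ZMod n).val = s
  simp

theorem range_lift : (lift hr hs hsr).range = Subgroup.closure {r, s} := by
  apply le_antisymm
  · have hr_mem : r ∈ Subgroup.closure {r, s} := Subgroup.subset_closure (by simp)
    have hs_mem : s ∈ Subgroup.closure {r, s} := Subgroup.subset_closure (by simp)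
    rintro _ ⟨i | i, rfl⟩
    · exact pow_mem hr_mem _
    · exact mul_mem hs_mem (pow_mem hr_mem _)
  · rw [Subgroup.closure_le]
    rintro _ (rfl | rfl)
    · exact ⟨.r (1 : ℕ), (lift_r_natCast hr hs hsr 1).trans (pow_one _)⟩
    · exact ⟨.sr 0, by simp⟩

end DihedralGroup

noncomputable def ρ : Equiv.Perm (ℂ × ℂ) := s₂ * s₁ * s₃

theorem s₁_apply (p : ℂ × ℂ) : s₁ p = (p.2, p.1) := rfl

theorem s₂_apply (p : ℂ × ℂ) : s₂ p = (-p.1 - 2, -p.2 - 2) := rfl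

theorem s₃_apply (p : ℂ × ℂ) : s₃ p = (p.1, -p.1 - p.2 - 3) := rfl

theorem ρ_apply (p : ℂ × ℂ) : ρ p = (p.1 + p.2 + 1, -p.1 - 2) := by
  simp only [ρ, Equiv.Perm.mul_apply, s₁_apply, s₂_apply, s₃_apply]
  ext <;> ring

theorem s₁_mul_self : s₁ * s₁ = 1 := by
  ext p <;> rfl

theorem ρ_mul_s₁ : ρ * s₁ = s₁ * ρ⁻¹ := by
  rw [eq_mul_inv_iff_mul_eq]
  ext p <;> simp only [Equiv.Perm.mul_apply, ρ_apply, s₁_apply] <;> ring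

theorem ρ_pow_three : ρ ^ 3 = s₂ := by
  ext p <;> simp [pow_succ, ρ_apply, s₂_apply] <;> ring

theorem s₁_mul_ρ_pow_four : s₁ * ρ ^ 4 = s₃ := by
  ext p <;> simp [pow_succ, ρ_apply, s₁_apply, s₃_apply] <;> ring

theorem ρ_pow_six : ρ ^ 6 = 1 := by
  ext p <;> simp [pow_succ, ρ_apply] <;> ring

theorem orderOf_ρ : orderOf ρ = 6 := by
  refine (orderOf_eq_iff (by norm_num)).mpr ⟨ρ_pow_six, fun m hm hm0 h => ?_⟩
  have h0 := congrArg (· ((0 : ℂ), (0 : ℂ))) h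
  interval_cases m <;> norm_num [pow_succ, ρ_apply, Prod.ext_iff] at h0

theorem s₁_notMem_zpowers_ρ : s₁ ∉ Subgroup.zpowers ρ := by
  rintro ⟨k, hk⟩
  have hcomm : s₁ * ρ = ρ * s₁ := (hk ▸ (Commute.refl ρ).zpow_left k : Commute s₁ ρ)
  have h0 := congrArg (· ((0 : ℂ), (0 : ℂ))) hcomm
  norm_num [ρ_apply, s₁_apply, Prod.ext_iff] at h0

theorem closure_s₁_s₂_s₃ :
    Subgroup.closure ({s₁, s₂, s₃} : Set (Equiv.Perm (ℂ × ℂ))) = Subgroup.closure {ρ, s₁} := by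
  apply le_antisymm <;> rw [Subgroup.closure_le]
  · have hρ : ρ ∈ Subgroup.closure {ρ, s₁} := Subgroup.subset_closure (by simp)
    have hs₁ : s₁ ∈ Subgroup.closure {ρ, s₁} := Subgroup.subset_closure (by simp)
    rintro _ (rfl | rfl | rfl)
    · exact hs₁
    · exact ρ_pow_three ▸ pow_mem hρ 3
    · exact s₁_mul_ρ_pow_four ▸ mul_mem hs₁ (pow_mem hρ 4)
  · have mem (g : Equiv.Perm (ℂ × ℂ)) (hg : g = s₁ ∨ g = s₂ ∨ g = s₃) :
        g ∈ Subgroup.closure {s₁, s₂, s₃} := Subgroup.subset_closure hg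
    rintro _ (rfl | rfl)
    · exact mul_mem (mul_mem (mem s₂ (by simp)) (mem s₁ (by simp))) (mem s₃ (by simp))
    · exact mem s₁ (by simp)

/-- The subgroup of bijections of `ℂ²` generated by `s₁, s₂, s₃` is isomorphic
to the dihedral group of order 12 (the symmetry group of a regular hexagon). -/
theorem generated_group_is_dihedral :
    Nonempty ((Subgroup.closure ({s₁, s₂, s₃} : Set (Equiv.Perm (ℂ × ℂ)))) ≃* DihedralGroup 6) := by
  rw [closure_s₁_s₂_s₃, ← DihedralGroup.range_lift ρ_pow_six s₁_mul_self ρ_mul_s₁]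
  exact ⟨(MonoidHom.ofInjective
    (DihedralGroup.lift_injective orderOf_ρ s₁_mul_self ρ_mul_s₁ s₁_notMem_zpowers_ρ)).symm⟩
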